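/- Let U, V : ℝ → ℝ be smooth functions with U, V > 0 on ℝ, solving the ODE system U'' = V²U and V'' = U²V on ℝ, with U(x) → 0 as x → −∞ and U′(x) → 1 as x → +∞. Then U is strictly increasing and strictly convex on ℝ: U′(x) > 0 and U''(x) > 0 for all x ∈ ℝ. Consequently, if in addition V(x) = U(−x) for all x, then V′(x) < 0 for all x ∈ ℝ. -/

import Mathlib

open Real Filter

theorem U_increasing_convex
    (U V : ℝ → ℝ)
    (hU : ContDiff ℝ (⊤ : ℕ∞) U) (hV : ContDiff ℝ (⊤ : ℕ∞) V)
    (hUpos : ∀ x, 0 < U x) (hVpos : ∀ x, 0 < V x)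
    (hUode : ∀ x, deriv (deriv U) x = (V x) ^ 2 * U x)
    (hVode : ∀ x, deriv (deriv V) x = (U x) ^ 2 * V x)
    (hUlim : Tendsto U atBot (nhds 0))
    (hU'lim : Tendsto (deriv U) atTop (nhds 1)) :
    (∀ x, 0 < deriv U x ∧ 0 < deriv (deriv U) x) ∧
      ((∀ x, V x = U (-x)) → ∀ x, deriv V x < 0) := by
  have hU'' : ∀ x, 0 < deriv (deriv U) x := by
    intro x
    rw [hUode x]
    exact mul_pos (pow_pos (hVpos x) 2) (hUpos x)
  have hUd : Differentiable ℝ U := hU.differentiable (by simp)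
  have hU'cd : ContDiff ℝ (⊤ : ℕ∞) (deriv U) := (contDiff_infty_iff_deriv.mp (hU.of_le (by simp))).2
  have hU'd : Differentiable ℝ (deriv U) := hU'cd.differentiable (by simp)
  have hmono : StrictMono (deriv U) :=
    strictMono_of_deriv_pos hU''
  have hU' : ∀ x, 0 < deriv U x := by
    intro x₀
    by_contra h
    push_neg at h
    -- U is strictly antitone on Iic x₀
    have hanti : StrictAntiOn U (Set.Iic x₀) := by
      apply strictAntiOn_of_deriv_neg (convex_Iic x₀) (hUd.continuous.continuousOn)
      intro x hx
      rw [interior_Iic] at hx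
      exact lt_of_lt_of_le (hmono hx) h
    have hev : ∀ᶠ x in atBot, U x₀ ≤ U x := by
      filter_upwards [eventually_le_atBot x₀] with x hx
      rcases eq_or_lt_of_le hx with rfl | hlt
      · exact le_rfl
      · exact (hanti hlt.le Set.self_mem_Iic hlt).le
    have : U x₀ ≤ 0 := ge_of_tendsto hUlim hev
    exact absurd this (not_le.mpr (hUpos x₀))
  refine ⟨fun x => ⟨hU' x, hU'' x⟩, ?_⟩
  intro hVU x
  have : V = fun x => U (-x) := funext hVU
  rw [this]
  have hd : HasDerivAt (fun x => U (-x)) (-deriv U (-x)) x := by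
    have := (hUd (-x)).hasDerivAt
    simpa [Function.comp_def] using this.comp x (hasDerivAt_neg x)
  rw [hd.deriv]
  simpa using hU' (-x)
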